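/- Soundness of AX_det for the class M_det of deterministic causal simulation models: every theorem of AX_det is true in every deterministic causal simulation model; in particular every instance of axiom F: ⟨α⟩β → [α]β holds in every model whose machine is deterministic. -/

import Mathlib

set_option maxHeartbeats 1000000

namespace CausalSim

/-! ### Propositional syntax -/

/-- Propositional formulas over atoms `X_i`. -/
inductive PropForm : Type
  | atom : ℕ → PropForm
  | neg : PropForm → PropForm
  | and : PropForm → PropForm → PropForm
  | or : PropForm → PropForm → PropForm
  deriving DecidableEq

def PropForm.imp (φ ψ : PropForm) : PropForm := .or (.neg φ) ψ

/-- A fixed propositional contradiction. -/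
def PropForm.bot : PropForm := .and (.atom 0) (.neg (.atom 0))

/-- Its negation, a fixed tautology. -/
def PropForm.top : PropForm := PropForm.neg PropForm.bot

def PropForm.eval (v : ℕ → Bool) : PropForm → Bool
  | .atom i => v i
  | .neg φ => !(φ.eval v)
  | .and φ ψ => φ.eval v && ψ.eval v
  | .or φ ψ => φ.eval v || ψ.eval v

/-- `L_int`: ordered conjunctions of literals over distinct atoms, represented by
the list of literals `(index, polarity)`, with strictly increasing indices.
The empty list represents the empty intervention `⊤`. -/
abbrev Lint : Type := {l : List (ℕ × Bool) // l.Chain' fun p q => p.1 < q.1}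

instance : DecidableEq Lint := fun a b =>
  decidable_of_iff (a.1 = b.1) Subtype.ext_iff.symm

def Lint.top : Lint := ⟨[], List.isChain_nil⟩

/-- The partial assignment (intervention) specified by `α ∈ L_int`. -/
def Lint.itv (α : Lint) : ℕ → Option Bool :=
  fun i => (α.1.find? fun p => p.1 == i).map Prod.snd

def PropForm.lit (p : ℕ × Bool) : PropForm :=
  if p.2 then .atom p.1 else .neg (.atom p.1)

/-- `α ∈ L_int` regarded as a propositional formula (conjunction of its literals;
`⊤` for the empty intervention). -/
def Lint.toProp (α : Lint) : PropForm :=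
  match α.1 with
  | [] => PropForm.top
  | p :: rest => rest.foldl (fun acc q => .and acc (.lit q)) (.lit p)

/-! ### The language `L` -/

/-- The causal simulation language `L`: propositional formulas over the atoms
`X ∪ L_cond`, where a conditional `[α]β` has antecedent `α ∈ L_int` and
consequent `β ∈ L_prop`. -/
inductive LForm : Type
  | atom : ℕ → LForm
  | cond : Lint → PropForm → LForm
  | neg : LForm → LForm
  | and : LForm → LForm → LForm
  | or : LForm → LForm → LForm

def LForm.imp (φ ψ : LForm) : LForm := .or (.neg φ) ψ

def LForm.iff (φ ψ : LForm) : LForm := .and (φ.imp ψ) (ψ.imp φ)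

/-- `⟨α⟩β`, an abbreviation for `¬[α]¬β`. -/
def LForm.dia (α : Lint) (β : PropForm) : LForm := .neg (.cond α (.neg β))

/-- The embedding of `L_prop` into `L`. -/
def PropForm.toL : PropForm → LForm
  | .atom i => .atom i
  | .neg φ => .neg φ.toL
  | .and φ ψ => .and φ.toL ψ.toL
  | .or φ ψ => .or φ.toL ψ.toL

/-- Evaluation of an `L`-formula treating the elements of `X ∪ L_cond` as
propositional atoms: `v` assigns values to the `X`-atoms and `w` to the
conditional atoms. -/
def LForm.evalA (v : ℕ → Bool) (w : Lint → PropForm → Bool) : LForm → Bool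
  | .atom i => v i
  | .cond α β => w α β
  | .neg φ => !(φ.evalA v w)
  | .and φ ψ => φ.evalA v w && ψ.evalA v w
  | .or φ ψ => φ.evalA v w || ψ.evalA v w

/-- Substitution instances of propositional tautologies over the atoms `X ∪ L_cond`. -/
def Tautology (φ : LForm) : Prop := ∀ v w, φ.evalA v w = true

/-! ### Turing machines over a Boolean variable tape, and interventions -/

/-- A transition rule `((q, read), (q', write, moveRight))`. -/
abbrev Rule : Type := (ℕ × Bool) × (ℕ × Bool × Bool)

/-- A (possibly non-deterministic) Turing machine, given by its finite list of
transition rules; the initial control state is `0`, and the machine halts in a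
configuration to which no rule applies. -/
abbrev Machine : Type := List Rule

/-- A configuration: control state, head position, and tape contents. -/
structure Cfg where
  q : ℕ
  pos : ℕ
  tape : ℕ → Bool

/-- The initial tape: the intervention `itv` first sets the intervened variables. -/
def initTape (itv : ℕ → Option Bool) (x : ℕ → Bool) : ℕ → Bool :=
  fun i => (itv i).getD (x i)

/-- Writing under an intervention: writes to intervened variables are ignored. -/
def writeTape (itv : ℕ → Option Bool) (t : ℕ → Bool) (pos : ℕ) (b : Bool) : ℕ → Bool :=
  if itv pos = none then Function.update t pos b else t

def movePos (p : ℕ) (right : Bool) : ℕ := if right then p + 1 else p - 1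

/-- One step of the intervened machine `I_itv(T)`. -/
def MStep (T : Machine) (itv : ℕ → Option Bool) (c c' : Cfg) : Prop :=
  ∃ r ∈ T, r.1 = (c.q, c.tape c.pos) ∧
    c' = ⟨r.2.1, movePos c.pos r.2.2.2, writeTape itv c.tape c.pos r.2.2.1⟩

/-- A halted configuration: no rule applies. -/
def Halted (T : Machine) (c : Cfg) : Prop := ∀ r ∈ T, r.1 ≠ (c.q, c.tape c.pos)

/-- The set of result tapes of halting executions of `I_itv(T)` on input `x`. -/
def Outputs (T : Machine) (itv : ℕ → Option Bool) (x : ℕ → Bool) : Set (ℕ → Bool) :=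
  {y | ∃ c : Cfg, Relation.ReflTransGen (MStep T itv) ⟨0, 0, initTape itv x⟩ c ∧
        Halted T c ∧ c.tape = y}

/-- Deterministic machines: at most one rule per (state, read symbol). -/
def Machine.Det (T : Machine) : Prop := ∀ r₁ ∈ T, ∀ r₂ ∈ T, r₁.1 = r₂.1 → r₁ = r₂

/-- State descriptions have finite support. -/
def FinSupp (x : ℕ → Bool) : Prop := {i | x i = true}.Finite

/-- Machines with at least one halting execution on every input tape under
every intervention. -/
def Machine.TotalHalting (T : Machine) : Prop :=
  ∀ (α : Lint) (x : ℕ → Bool), FinSupp x → (Outputs T α.itv x).Nonempty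

/-- Finite state machines: over all inputs and interventions, the machine reads and
writes only boundedly many tape variables. -/
def Machine.FiniteState (T : Machine) : Prop :=
  ∃ B : ℕ, ∀ (α : Lint) (x : ℕ → Bool), FinSupp x →
    ∀ c : Cfg, Relation.ReflTransGen (MStep T α.itv) ⟨0, 0, initTape α.itv x⟩ c → c.pos < B

/-! ### Causal simulation models and satisfaction -/

/-- A causal simulation model: a machine together with a state description with
finite support. -/
structure CSM where
  T : Machine
  x : ℕ → Bool
  fin : FinSupp x

/-- Satisfaction, generically in the map sending each intervention `α ∈ L_int`
to the set of output tapes of the corresponding halting executions. -/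
def SatGen (O : Lint → Set (ℕ → Bool)) (x : ℕ → Bool) : LForm → Prop
  | .atom i => x i = true
  | .cond α β => ∀ y ∈ O α, β.eval y = true
  | .neg φ => ¬ SatGen O x φ
  | .and φ ψ => SatGen O x φ ∧ SatGen O x ψ
  | .or φ ψ => SatGen O x φ ∨ SatGen O x ψ

/-- `(T, x) ⊨ φ`. -/
def CSM.Sat (M : CSM) (φ : LForm) : Prop :=
  SatGen (fun α => Outputs M.T α.itv M.x) M.x φ

/-- The class `M` of all causal simulation models. -/
def inM (_ : CSM) : Prop := True

/-- The class `M_det`. -/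
def inMdet (M : CSM) : Prop := M.T.Det

/-- The class `M↓`. -/
def inMhalt (M : CSM) : Prop := M.T.TotalHalting

/-- The class `M↓_det`. -/
def inMdethalt (M : CSM) : Prop := M.T.Det ∧ M.T.TotalHalting

/-! ### The axiomatic systems -/

/-- Derivability from: propositional tautologies (over atoms `X ∪ L_cond`),
the axioms `R` and `K`, extra axioms `extra`, modus ponens, and the rule `RW`. -/
inductive Deriv (extra : LForm → Prop) : LForm → Prop
  | taut {φ} : Tautology φ → Deriv extra φ
  | extra {φ} : extra φ → Deriv extra φ
  | axR (α : Lint) : Deriv extra (.cond α α.toProp)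
  | axK (α : Lint) (β γ : PropForm) :
      Deriv extra ((LForm.cond α (β.imp γ)).imp ((LForm.cond α β).imp (.cond α γ)))
  | mp {φ ψ} : Deriv extra (φ.imp ψ) → Deriv extra φ → Deriv extra ψ
  | rw (α : Lint) {β β' : PropForm} :
      Deriv extra (β.imp β').toL → Deriv extra ((LForm.cond α β).imp (.cond α β'))

/-- Instances of axiom `F : ⟨α⟩β → [α]β`. -/
def axF (φ : LForm) : Prop :=
  ∃ (α : Lint) (β : PropForm), φ = (LForm.dia α β).imp (.cond α β)

/-- Instances of axiom `D : [α]β → ⟨α⟩β`. -/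
def axD (φ : LForm) : Prop :=
  ∃ (α : Lint) (β : PropForm), φ = (LForm.cond α β).imp (LForm.dia α β)

def AX : LForm → Prop := Deriv fun _ => False
def AXdet : LForm → Prop := Deriv axF
def AXhalt : LForm → Prop := Deriv axD
def AXdethalt : LForm → Prop := Deriv fun φ => axF φ ∨ axD φ

end CausalSim
namespace CausalSim

/-! ### Normal form clauses and selection functions -/

def bigAndL : List LForm → LForm
  | [] => PropForm.top.toL
  | φ :: rest => rest.foldl .and φ

def bigOrL : List LForm → LForm
  | [] => PropForm.bot.toL
  | φ :: rest => rest.foldl .or φ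

def bigOrP : List PropForm → PropForm
  | [] => PropForm.bot
  | φ :: rest => rest.foldl .or φ

/-- The data of a conjunctive clause
`π ∧ ⋀_{i∈I}([α_i] ⋁_{j∈J_i} β_{i,j}) ∧ ⋀_{k∈K} ⟨α_k⟩ β_k`. -/
structure Clause where
  pi : PropForm
  boxes : List (Lint × List Lint)
  dias : List (Lint × Lint)

/-- The `α_i` (for distinct `i ∈ I`) are pairwise distinct. -/
def Clause.wf (δ : Clause) : Prop := (δ.boxes.map Prod.fst).Pairwise (· ≠ ·)

def Clause.toLForm (δ : Clause) : LForm :=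
  .and δ.pi.toL (.and
    (bigAndL (δ.boxes.map fun p => .cond p.1 (bigOrP (p.2.map Lint.toProp))))
    (bigAndL (δ.dias.map fun p => LForm.dia p.1 p.2.toProp)))

/-- `S_δ`: the antecedents occurring in the clause `δ`. -/
def Clause.ants (δ : Clause) : List Lint := δ.boxes.map Prod.fst ++ δ.dias.map Prod.fst

/-- A list of literals is propositionally consistent. -/
def LitsConsistent (l : List (ℕ × Bool)) : Prop :=
  ∀ i, ¬((i, true) ∈ l ∧ (i, false) ∈ l)

/-- `γ` is the `L_int`-equivalent of the conjunction of the literals `l`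
(reordering and deletion of repeated literals). -/
def Lint.IsEquivOf (γ : Lint) (l : List (ℕ × Bool)) : Prop := γ.1.toFinset = l.toFinset

/-- `f` is a selection function for the clause `δ`. -/
def IsSelection (δ : Clause) (f : Lint → List Lint) : Prop :=
  (∀ α ∈ δ.ants, α ∉ δ.dias.map Prod.fst → f α = []) ∧
  (∀ α ∈ δ.dias.map Prod.fst, ∃ sel : Lint × Lint → Lint,
    f α = (δ.dias.filter fun p => decide (p.1 = α)).map sel ∧
    ∀ p ∈ δ.dias, p.1 = α →
      (∀ J, (α, J) ∈ δ.boxes →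
        ∃ j ∈ J, LitsConsistent (α.1 ++ p.2.1 ++ j.1) ∧
          (sel p).IsEquivOf (α.1 ++ p.2.1 ++ j.1)) ∧
      (α ∉ δ.boxes.map Prod.fst →
        LitsConsistent (α.1 ++ p.2.1) ∧ (sel p).IsEquivOf (α.1 ++ p.2.1)))

/-! ### Sizes -/

def PropForm.size : PropForm → ℕ
  | .atom i => i + 1
  | .neg φ => φ.size + 1
  | .and φ ψ => φ.size + ψ.size + 1
  | .or φ ψ => φ.size + ψ.size + 1

def Lint.size (α : Lint) : ℕ := (α.1.map fun p => p.1 + 1).sum + 1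

/-- `|φ|`, the number of symbols of `φ` (an occurrence of the atom `X_i`
contributing `i + 1` symbols). -/
def LForm.size : LForm → ℕ
  | .atom i => i + 1
  | .cond α β => α.size + β.size + 1
  | .neg φ => φ.size + 1
  | .and φ ψ => φ.size + ψ.size + 1
  | .or φ ψ => φ.size + ψ.size + 1

def PropForm.maxAtom : PropForm → ℕ
  | .atom i => i
  | .neg φ => φ.maxAtom
  | .and φ ψ => max φ.maxAtom ψ.maxAtom
  | .or φ ψ => max φ.maxAtom ψ.maxAtom

def Lint.maxAtom (α : Lint) : ℕ := (α.1.map Prod.fst).foldr max 0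

/-- `N`: the largest index of an atom occurring in `φ`. -/
def LForm.maxAtom : LForm → ℕ
  | .atom i => i
  | .cond α β => max α.maxAtom β.maxAtom
  | .neg φ => φ.maxAtom
  | .and φ ψ => max φ.maxAtom ψ.maxAtom
  | .or φ ψ => max φ.maxAtom ψ.maxAtom

/-- `S_φ`: the antecedents of the conditionals occurring in `φ`. -/
def LForm.ants : LForm → List Lint
  | .atom _ => []
  | .cond α _ => [α]
  | .neg φ => φ.ants
  | .and φ ψ => φ.ants ++ ψ.ants
  | .or φ ψ => φ.ants ++ ψ.ants

/-! ### The programming language `PL` -/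

/-- Assignment statements `X_i := c`, `X_i := X_j`, `X_i := !X_j`. -/
inductive BAssign : Type
  | const (i : ℕ) (c : Bool)
  | copy (i j : ℕ)
  | negcopy (i j : ℕ)
  deriving DecidableEq

def BAssign.target : BAssign → ℕ
  | .const i _ => i
  | .copy i _ => i
  | .negcopy i _ => i

def BAssign.maxVar : BAssign → ℕ
  | .const i _ => i
  | .copy i j => max i j
  | .negcopy i j => max i j

/-- Tests `X_i = c`, `X_i = X_j`, `X_i != X_j`, and conjunctions thereof. -/
inductive BTest : Type
  | eqc (i : ℕ) (c : Bool)
  | eqv (i j : ℕ)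
  | nev (i j : ℕ)
  | and (t₁ t₂ : BTest)
  deriving DecidableEq

def BTest.eval (s : ℕ → Bool) : BTest → Bool
  | .eqc i c => s i == c
  | .eqv i j => s i == s j
  | .nev i j => !(s i == s j)
  | .and t₁ t₂ => t₁.eval s && t₂.eval s

def BTest.size : BTest → ℕ
  | .eqc _ _ => 1
  | .eqv _ _ => 1
  | .nev _ _ => 1
  | .and t₁ t₂ => t₁.size + t₂.size + 1

/-- Programs of `PL`: the empty program, assignments, sequencing,
if-then-else, nondeterministic choice, and the unconditional infinite loop. -/
inductive Prog : Type
  | empty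
  | assign (a : BAssign)
  | seq (p q : Prog)
  | ite (c : BTest) (p q : Prog)
  | choose (ps : List Prog)
  | loop

mutual
  /-- The length of a program. -/
  def Prog.size : Prog → ℕ
    | .empty => 1
    | .assign _ => 1
    | .seq p q => p.size + q.size + 1
    | .ite c p q => c.size + p.size + q.size + 1
    | .choose ps => Prog.sizeList ps + 1
    | .loop => 1
  def Prog.sizeList : List Prog → ℕ
    | [] => 0
    | p :: ps => p.size + Prog.sizeList ps
end

/-- The effect of an assignment under an intervention: writes to intervened
variables are ignored. -/
def applyAssign (itv : ℕ → Option Bool) (a : BAssign) (s : ℕ → Bool) : ℕ → Bool :=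
  let v : Bool := match a with
    | .const _ c => c
    | .copy _ j => s j
    | .negcopy _ j => !(s j)
  if itv a.target = none then Function.update s a.target v else s

/-- Big-step semantics of `PL` under an intervention. A `loop`-statement has no
halting execution, and a `choose`-statement executes one of its branches. -/
inductive BigStep (itv : ℕ → Option Bool) : Prog → (ℕ → Bool) → (ℕ → Bool) → Prop
  | empty (s) : BigStep itv .empty s s
  | assign (a s) : BigStep itv (.assign a) s (applyAssign itv a s)
  | seq {p q s t u} : BigStep itv p s t → BigStep itv q t u → BigStep itv (.seq p q) s u
  | iteT {c p q s t} : c.eval s = true → BigStep itv p s t → BigStep itv (.ite c p q) s t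
  | iteF {c p q s t} : c.eval s = false → BigStep itv q s t → BigStep itv (.ite c p q) s t
  | choose {ps p s t} : p ∈ ps → BigStep itv p s t → BigStep itv (.choose ps) s t

/-- The set of result tapes of halting executions of the intervened program. -/
def ProgOutputs (P : Prog) (itv : ℕ → Option Bool) (x : ℕ → Bool) : Set (ℕ → Bool) :=
  {y | BigStep itv P (initTape itv x) y}

/-- Satisfaction `(T_P, x) ⊨ φ` for the machine compiled from the program `P`
(whose executions are those of `P`). -/
def ProgSat (P : Prog) (x : ℕ → Bool) (φ : LForm) : Prop :=
  SatGen (fun α => ProgOutputs P α.itv x) x φ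

end CausalSim
namespace CausalSim

/-! ### The canonical program fragment `PL†_{φ,C}` -/

def seqList : List Prog → Prog
  | [] => .empty
  | p :: ps => .seq p (seqList ps)

/-- Listing 1: `IsIntervened(X_i)` (with offset parameter `N`): performs the
toggle check for `X_i`, records the result in `X_{i+N}`, uses `X_{i+2N}` as a
temporary variable, and leaves `X_i` unchanged. -/
def isIntervened (N i : ℕ) : Prog :=
  seqList [
    .assign (.copy (i + N) i),
    .assign (.negcopy i i),
    .assign (.copy (i + 2 * N) i),
    .ite (.eqv (i + 2 * N) (i + N))
      (.assign (.const (i + N) true)) (.assign (.const (i + N) false)),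
    .assign (.negcopy i i)]

/-- One copy of `IsIntervened(X_i)` for each `1 ≤ i ≤ N`. -/
def isIntervenedAll (N : ℕ) : Prog :=
  seqList ((List.range' 1 N).map (isIntervened N))

/-- Listing 2: `HoldsFromIntervention(α)`: the condition checking that exactly
the variables occurring in `α` are marked as intervened and carry the values
specified by `α`'s literals. -/
def holdsFromItv (N : ℕ) (α : Lint) : BTest :=
  ((List.range' 1 N).map fun i =>
    match α.itv i with
    | some b => BTest.and (.eqc i b) (.eqc (i + N) true)
    | none => BTest.eqc (i + N) false).foldr .and (.eqv 0 0)

/-- A sequence of assignment statements. -/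
def assignSeq (l : List BAssign) : Prog := seqList (l.map Prog.assign)

/-- An admissible assignment sequence: assignments only to (pairwise distinct)
variables `X_i` with `1 ≤ i ≤ N`, mentioning only variables of index `≤ N`. -/
def GoodAssigns (N : ℕ) (l : List BAssign) : Prop :=
  (l.map BAssign.target).Nodup ∧ ∀ a ∈ l, a.maxVar ≤ N ∧ 1 ≤ a.target

/-- The admissible bodies of the `if`-statements of a fragment program:
(a) a `choose`-statement with at most `C·|φ|` branches, each an admissible
assignment sequence; (b) a single admissible assignment sequence; or
(c) a single `loop`-statement — with (a) excluded for the deterministic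
dialects and (c) excluded for the halting dialects. -/
def IfBody (C N sz : ℕ) (allowChoose allowLoop : Bool) (p : Prog) : Prop :=
  (allowChoose = true ∧ ∃ branches : List (List BAssign),
      p = .choose (branches.map assignSeq) ∧ branches.length ≤ C * sz ∧
      ∀ l ∈ branches, GoodAssigns N l) ∨
  (∃ l : List BAssign, p = assignSeq l ∧ GoodAssigns N l) ∨
  (allowLoop = true ∧ p = .loop)

/-- Membership in the fragment `PL†_{φ,C}`: one copy of `IsIntervened(X_i)` for
each `1 ≤ i ≤ N`, followed by at most one `if`-statement with condition
`HoldsFromIntervention(α)` for each antecedent `α` occurring in `φ`, with an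
admissible body. -/
def InFrag (C : ℕ) (φ : LForm) (allowChoose allowLoop : Bool) (P : Prog) : Prop :=
  ∃ ifs : List (Lint × Prog),
    (ifs.map Prod.fst).Nodup ∧
    (∀ q ∈ ifs, q.1 ∈ φ.ants ∧ IfBody C φ.maxAtom φ.size allowChoose allowLoop q.2) ∧
    P = .seq (isIntervenedAll φ.maxAtom)
      (seqList (ifs.map fun q => Prog.ite (holdsFromItv φ.maxAtom q.1) q.2 .empty))

/-! ### Encodings into binary strings -/

def encNat (n : ℕ) : List Bool := List.replicate n true ++ [false]

def encListGen (enc : α → List Bool) (l : List α) : List Bool :=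
  encNat l.length ++ l.flatMap enc

def encLit (p : ℕ × Bool) : List Bool := encNat p.1 ++ [p.2]

def encLint (α : Lint) : List Bool := encListGen encLit α.1

def encProp : PropForm → List Bool
  | .atom i => encNat 0 ++ encNat i
  | .neg φ => encNat 1 ++ encProp φ
  | .and φ ψ => encNat 2 ++ encProp φ ++ encProp ψ
  | .or φ ψ => encNat 3 ++ encProp φ ++ encProp ψ

/-- A standard encoding of `L`-formulas as binary strings. -/
def encLForm : LForm → List Bool
  | .atom i => encNat 0 ++ encNat i
  | .cond α β => encNat 1 ++ encLint α ++ encProp β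
  | .neg φ => encNat 2 ++ encLForm φ
  | .and φ ψ => encNat 3 ++ encLForm φ ++ encLForm ψ
  | .or φ ψ => encNat 4 ++ encLForm φ ++ encLForm ψ

def encAssign : BAssign → List Bool
  | .const i c => encNat 0 ++ encNat i ++ [c]
  | .copy i j => encNat 1 ++ encNat i ++ encNat j
  | .negcopy i j => encNat 2 ++ encNat i ++ encNat j

def encTest : BTest → List Bool
  | .eqc i c => encNat 0 ++ encNat i ++ [c]
  | .eqv i j => encNat 1 ++ encNat i ++ encNat j
  | .nev i j => encNat 2 ++ encNat i ++ encNat j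
  | .and t₁ t₂ => encNat 3 ++ encTest t₁ ++ encTest t₂

mutual
  /-- A standard encoding of programs as binary strings. -/
  def encProg : Prog → List Bool
    | .empty => encNat 0
    | .assign a => encNat 1 ++ encAssign a
    | .seq p q => encNat 2 ++ encProg p ++ encProg q
    | .ite c p q => encNat 3 ++ encTest c ++ encProg p ++ encProg q
    | .choose ps => encNat 4 ++ encNat ps.length ++ encProgList ps
    | .loop => encNat 5
  def encProgList : List Prog → List Bool
    | [] => []
    | p :: ps => encProg p ++ encProgList ps
end

/-! ### Polynomial time, NP, and NP-completeness -/

/-- The identity finite encoding of binary strings. -/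
def listBoolFinEncoding : Computability.Encoding (List Bool) Bool where
  encode := id
  decode := fun l => some l
  decode_encode := fun _ => rfl

/-- `f` is computable in polynomial time (by a Turing machine). -/
def PolyTimeFun (f : List Bool → List Bool) : Prop :=
  Nonempty (Turing.TM2ComputableInPolyTime listBoolFinEncoding.encode listBoolFinEncoding.encode f)

/-- Polynomial-time many-one reducibility. -/
def PolyReducible (L₁ L₂ : List Bool → Prop) : Prop :=
  ∃ f : List Bool → List Bool, PolyTimeFun f ∧ ∀ s, L₁ s ↔ L₂ (f s)

/-- A self-delimiting pairing of binary strings. -/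
def encPairStr (a b : List Bool) : List Bool := encNat a.length ++ a ++ b

/-- The class NP, via polynomial-time verifiers of polynomial-length certificates. -/
def InNP (L : List Bool → Prop) : Prop :=
  ∃ (V : List Bool → Bool) (p : Polynomial ℕ),
    PolyTimeFun (fun s => [V s]) ∧
    ∀ s, L s ↔ ∃ w : List Bool, w.length ≤ p.eval s.length ∧ V (encPairStr s w) = true

/-- NP-completeness with respect to polynomial-time many-one reductions. -/
def NPComplete (L : List Bool → Prop) : Prop :=
  InNP L ∧ ∀ L' : List Bool → Prop, InNP L' → PolyReducible L' L

/-- The language Sim-Sat for a class of models: encodings of `L`-formulas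
satisfied by some model in the class. -/
def SimSatLang (cls : CSM → Prop) : List Bool → Prop :=
  fun s => ∃ φ : LForm, s = encLForm φ ∧ ∃ M : CSM, cls M ∧ M.Sat φ

/-! ### Miscellaneous helpers -/

/-- The state description with support the list `xs`. -/
def stateOf (xs : List ℕ) : ℕ → Bool := fun i => decide (i ∈ xs)

theorem finSupp_stateOf (xs : List ℕ) : FinSupp (stateOf xs) := by
  apply Set.Finite.subset (List.finite_toSet xs)
  intro i hi
  simpa [stateOf] using hi

/-- The model given by a machine and (the support of) a state description. -/
def csmOf (T : Machine) (xs : List ℕ) : CSM := ⟨T, stateOf xs, finSupp_stateOf xs⟩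

/-- The singleton intervention `X_n := 1`. -/
def lintSingle (n : ℕ) : Lint := ⟨[(n, true)], List.isChain_singleton _⟩

/-- The set `Ω` of the non-compactness proposition, for `f : ℕ → ℕ`. -/
def Omega (f : ℕ → ℕ) : Set LForm :=
  {ψ | ∃ n, ψ = LForm.neg (.atom n)} ∪
  {ψ | ∃ n, ψ = LForm.dia (lintSingle n) (.atom (f n))} ∪
  {ψ | ∃ n m, m ≠ n ∧ m ≠ f n ∧ ψ = LForm.cond (lintSingle n) (.neg (.atom m))}

end CausalSim

/-!
Soundness is checked rule by rule for an arbitrary outcome map `O` (sending an intervention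
to its set of result tapes) and an arbitrary state description; quantifying over the state
description is what makes RW sound, as its premise then holds at every result tape. Of the
outcome maps of models only two properties matter. Axiom R holds because writes to intervened
variables are ignored, so every result tape satisfies the intervention. Axiom F holds for
deterministic machines because a right-unique step relation reaches at most one halted
configuration, so there is at most one result tape.
-/

theorem Relation.ReflTransGen.eq_of_rightUnique {α : Type*} {r : α → α → Prop} {a b c : α}
    (U : Relator.RightUnique r) (hab : ReflTransGen r a b) (hac : ReflTransGen r a c)
    (hb : ∀ d, ¬ r b d) (hc : ∀ d, ¬ r c d) : b = c := by
  rcases hab.total_of_right_unique U hac with hbc | hcb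
  · rcases hbc.cases_head with rfl | ⟨d, hbd, -⟩
    · rfl
    · exact absurd hbd (hb d)
  · rcases hcb.cases_head with rfl | ⟨d, hcd, -⟩
    · rfl
    · exact absurd hcd (hc d)

namespace CausalSim

section Satisfaction

variable {O : Lint → Set (ℕ → Bool)} {x : ℕ → Bool}

open Classical in
theorem satGen_iff_evalA (φ : LForm) :
    SatGen O x φ ↔ φ.evalA x (fun α β => decide (∀ y ∈ O α, β.eval y = true)) = true := by
  induction φ <;> simp [SatGen, LForm.evalA, *]

theorem satGen_toL (β : PropForm) : SatGen O x β.toL ↔ β.eval x = true := by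
  induction β <;> simp [SatGen, PropForm.toL, PropForm.eval, *]

theorem satGen_imp {φ ψ : LForm} : SatGen O x (φ.imp ψ) ↔ (SatGen O x φ → SatGen O x ψ) := by
  simp only [LForm.imp, SatGen, imp_iff_not_or]

theorem eval_imp {y : ℕ → Bool} {β γ : PropForm} :
    (β.imp γ).eval y = true ↔ (β.eval y = true → γ.eval y = true) := by
  cases h : β.eval y <;> simp [PropForm.imp, PropForm.eval, h]

theorem satGen_axF {α : Lint} (hO : (O α).Subsingleton) (β : PropForm) :
    SatGen O x ((LForm.dia α β).imp (.cond α β)) := by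
  simp only [satGen_imp, LForm.dia, SatGen, PropForm.eval, not_forall, Bool.not_eq_true',
    Bool.not_eq_false]
  rintro ⟨y, hy, hβ⟩ y' hy'
  rwa [hO hy' hy]

theorem Deriv.satGen {extra : LForm → Prop} (hR : ∀ α, ∀ y ∈ O α, α.toProp.eval y = true)
    (hextra : ∀ φ, extra φ → ∀ x, SatGen O x φ) {φ : LForm} (h : Deriv extra φ)
    (x : ℕ → Bool) : SatGen O x φ := by
  induction h generalizing x with
  | taut ht => exact (satGen_iff_evalA _).2 (ht _ _)
  | extra he => exact hextra _ he x
  | axR α => exact hR α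
  | axK α β γ =>
    simp only [satGen_imp, SatGen, eval_imp]
    exact fun hβγ hβ y hy => hβγ y hy (hβ y hy)
  | mp _ _ ih₁ ih₂ => exact satGen_imp.1 (ih₁ x) (ih₂ x)
  | rw α _ ih =>
    simp only [satGen_imp, SatGen]
    exact fun hβ y hy => eval_imp.1 ((satGen_toL _).1 (ih y)) (hβ y hy)

end Satisfaction

section Machines

variable {T : Machine} {itv : ℕ → Option Bool}

theorem Halted.not_mStep {c : Cfg} (h : Halted T c) (c' : Cfg) : ¬ MStep T itv c c' := by
  rintro ⟨r, hr, hrc, -⟩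
  exact h r hr hrc

theorem Machine.Det.rightUnique_mStep (hT : T.Det) : Relator.RightUnique (MStep T itv) := by
  rintro c _ _ ⟨r₁, hr₁, hrc₁, rfl⟩ ⟨r₂, hr₂, hrc₂, rfl⟩
  obtain rfl := hT r₁ hr₁ r₂ hr₂ (hrc₁.trans hrc₂.symm)
  rfl

theorem Machine.Det.outputs_subsingleton (hT : T.Det) (x : ℕ → Bool) :
    (Outputs T itv x).Subsingleton := by
  rintro _ ⟨c₁, hc₁, hh₁, rfl⟩ _ ⟨c₂, hc₂, hh₂, rfl⟩
  rw [hc₁.eq_of_rightUnique hT.rightUnique_mStep hc₂ hh₁.not_mStep hh₂.not_mStep]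

theorem MStep.tape_eq_of_intervened {c c' : Cfg} (h : MStep T itv c c') {i : ℕ}
    (hi : itv i ≠ none) : c'.tape i = c.tape i := by
  obtain ⟨r, -, -, rfl⟩ := h
  unfold writeTape
  split_ifs with hpos
  · exact Function.update_of_ne (by rintro rfl; exact hi hpos) _ _
  · rfl

theorem reflTransGen_tape_eq_of_intervened {c c' : Cfg}
    (h : Relation.ReflTransGen (MStep T itv) c c') {i : ℕ} (hi : itv i ≠ none) :
    c'.tape i = c.tape i := by
  induction h with
  | refl => rfl
  | tail _ hstep ih => rw [hstep.tape_eq_of_intervened hi, ih]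

theorem apply_eq_of_mem_outputs {x y : ℕ → Bool} (hy : y ∈ Outputs T itv x) {i : ℕ} {b : Bool}
    (hi : itv i = some b) : y i = b := by
  obtain ⟨c, hc, -, rfl⟩ := hy
  rw [reflTransGen_tape_eq_of_intervened hc (by simp [hi])]
  simp [initTape, hi]

end Machines

section Interventions

theorem Lint.itv_of_mem {α : Lint} {p : ℕ × Bool} (hp : p ∈ α.1) : α.itv p.1 = some p.2 := by
  have hnd : (α.1.map Prod.fst).Nodup :=
    List.pairwise_map.2 ((List.isChain_iff_pairwise.1 α.2).imp Nat.ne_of_lt)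
  obtain ⟨q, hq⟩ := Option.isSome_iff_exists.1
    (List.find?_isSome.2 ⟨p, hp, by simp⟩ : (α.1.find? fun q => q.1 == p.1).isSome)
  have hqp : q = p :=
    List.inj_on_of_nodup_map hnd (List.mem_of_find?_eq_some hq) hp (by simpa using List.find?_some hq)
  simp [Lint.itv, hq, hqp]

theorem eval_lit {y : ℕ → Bool} {p : ℕ × Bool} :
    (PropForm.lit p).eval y = true ↔ y p.1 = p.2 := by
  rcases p with ⟨i, _ | _⟩ <;> simp [PropForm.lit, PropForm.eval]

theorem eval_foldl_and_lit {y : ℕ → Bool} (l : List (ℕ × Bool)) (acc : PropForm) :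
    (l.foldl (fun acc q => .and acc (.lit q)) acc).eval y = true ↔
      acc.eval y = true ∧ ∀ q ∈ l, y q.1 = q.2 := by
  induction l generalizing acc with
  | nil => simp
  | cons p l ih => simp [ih, PropForm.eval, eval_lit, and_assoc]

theorem Lint.eval_toProp {α : Lint} {y : ℕ → Bool} :
    α.toProp.eval y = true ↔ ∀ p ∈ α.1, y p.1 = p.2 := by
  unfold Lint.toProp
  split
  · simp_all [PropForm.top, PropForm.bot, PropForm.eval]
  · simp_all [eval_foldl_and_lit, eval_lit]

theorem eval_toProp_of_mem_outputs {T : Machine} {α : Lint} {x y : ℕ → Bool}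
    (hy : y ∈ Outputs T α.itv x) : α.toProp.eval y = true :=
  Lint.eval_toProp.2 fun _ hp => apply_eq_of_mem_outputs hy (Lint.itv_of_mem hp)

end Interventions

/-- Soundness of `AX_det` for the class `M_det` of deterministic
models; in particular every instance of `F : ⟨α⟩β → [α]β` holds in every model
whose machine is deterministic. -/
theorem AXdet_sound :
    (∀ φ : LForm, AXdet φ → ∀ M : CSM, inMdet M → M.Sat φ) ∧
    (∀ (α : Lint) (β : PropForm) (M : CSM), inMdet M →
      M.Sat ((LForm.dia α β).imp (.cond α β))) := by
  have hF (M : CSM) (hM : inMdet M) (α : Lint) (β : PropForm) (x : ℕ → Bool) :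
      SatGen (fun α => Outputs M.T α.itv M.x) x ((LForm.dia α β).imp (.cond α β)) :=
    satGen_axF (Machine.Det.outputs_subsingleton hM M.x) β
  refine ⟨fun φ hφ M hM => ?_, fun α β M hM => hF M hM α β M.x⟩
  refine Deriv.satGen (fun α y hy => eval_toProp_of_mem_outputs hy) ?_ hφ M.x
  rintro _ ⟨α, β, rfl⟩ x
  exact hF M hM α β x

end CausalSim
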